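/- arXiv:1810.07681 — 3 statements merged into one kernel-verified Lean document; each statement's English description precedes it below -/
import Mathlib

section
/- The function u*(t,x) = (1/t) · U(|x|/t) with U(ρ) = 2√(2(d−1)(d−4)) / (d−4+3ρ²) satisfies the focusing cubic wave equation ∂²_t u − Δ_x u = u³ on (0,∞) × ℝ^d for every dimension d ≥ 5. -/
/-!
Clearing denominators, `u*(t, x) = c t / ((d - 4) t² + 3 ‖x‖²)` with `c² = 8 (d - 1) (d - 4)`.
Restricted to a time line or to a coordinate line, this is a quotient with a quadratic
denominator, whose second derivative is explicit. Summing the coordinate second derivatives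
(using `∑ xᵢ² = ‖x‖²`), the wave equation becomes a polynomial identity in `t` and `‖x‖²`
that holds exactly when `c² = 8 (d - 1) (d - 4)`.
-/

open Filter Topology

lemma deriv_deriv_mul_div_sq_add {a b t : ℝ} (c : ℝ) (ht : a * t ^ 2 + b ≠ 0) :
    deriv (deriv fun s => c * s / (a * s ^ 2 + b)) t
      = 2 * a * c * t * (a * t ^ 2 - 3 * b) / (a * t ^ 2 + b) ^ 3 := by
  have hq : ∀ s : ℝ, HasDerivAt (fun s => a * s ^ 2 + b) (a * (2 * s)) s := fun s => by
    simpa using ((hasDerivAt_pow 2 s).const_mul a).add_const b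
  have hderiv : deriv (fun s => c * s / (a * s ^ 2 + b))
      =ᶠ[𝓝 t] fun s => c * (b - a * s ^ 2) / (a * s ^ 2 + b) ^ 2 := by
    have hcont : Continuous fun s : ℝ => a * s ^ 2 + b := by fun_prop
    filter_upwards [hcont.continuousAt.eventually_ne ht] with s hs
    have h : HasDerivAt (fun s => c * s / (a * s ^ 2 + b)) _ s :=
      ((hasDerivAt_id s).const_mul c).div (hq s) hs
    rw [h.deriv]
    simp only [id]
    field_simp
    ring
  have hnum : HasDerivAt (fun s => c * (b - a * s ^ 2)) (c * -(a * (2 * t))) t := by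
    simpa using (((hasDerivAt_pow 2 t).const_mul a).const_sub b).const_mul c
  have h : HasDerivAt (fun s => c * (b - a * s ^ 2) / (a * s ^ 2 + b) ^ 2) _ t :=
    hnum.div ((hq t).pow 2) (pow_ne_zero 2 ht)
  rw [hderiv.deriv_eq, h.deriv]
  field_simp
  ring

lemma deriv_deriv_div_quadratic_zero {k : ℝ} (C b a : ℝ) (hk : k ≠ 0) :
    deriv (deriv fun s => C / (k + b * s + a * s ^ 2)) 0 = C * (2 * b ^ 2 - 2 * a * k) / k ^ 3 := by
  have hq : ∀ s : ℝ, HasDerivAt (fun s => k + b * s + a * s ^ 2) (b + a * (2 * s)) s := fun s => by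
    have h : HasDerivAt (fun s => k + b * s + a * s ^ 2) _ s :=
      (((hasDerivAt_id s).const_mul b).const_add k).add ((hasDerivAt_pow 2 s).const_mul a)
    simpa using h
  have hderiv : deriv (fun s => C / (k + b * s + a * s ^ 2))
      =ᶠ[𝓝 0] fun s => -C * (b + 2 * a * s) / (k + b * s + a * s ^ 2) ^ 2 := by
    have h0 : k + b * 0 + a * 0 ^ 2 ≠ 0 := by simpa using hk
    have hcont : Continuous fun s : ℝ => k + b * s + a * s ^ 2 := by fun_prop
    filter_upwards [hcont.continuousAt.eventually_ne h0] with s hs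
    have h : HasDerivAt (fun s => C / (k + b * s + a * s ^ 2)) _ s :=
      (hasDerivAt_const s C).div (hq s) hs
    rw [h.deriv]
    field_simp
    ring
  have hnum : HasDerivAt (fun s => -C * (b + 2 * a * s)) (-C * (2 * a)) 0 := by
    simpa using (((hasDerivAt_id (0 : ℝ)).const_mul (2 * a)).const_add b).const_mul (-C)
  have h : HasDerivAt (fun s => -C * (b + 2 * a * s) / (k + b * s + a * s ^ 2) ^ 2) _ 0 :=
    hnum.div ((hq 0).pow 2) (by simpa using hk)
  rw [hderiv.deriv_eq, h.deriv]
  norm_num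
  field_simp
  ring

lemma EuclideanSpace.norm_add_smul_single_sq {ι : Type*} [Fintype ι] [DecidableEq ι]
    (x : EuclideanSpace ℝ ι) (i : ι) (s : ℝ) :
    ‖x + s • EuclideanSpace.single i (1 : ℝ)‖ ^ 2 = ‖x‖ ^ 2 + 2 * x i * s + s ^ 2 := by
  rw [norm_add_sq_real, real_inner_smul_right, EuclideanSpace.inner_single_right, norm_smul,
    PiLp.norm_single]
  simp only [conj_trivial, norm_one, mul_one, Real.norm_eq_abs, sq_abs]
  ring

lemma sum_deriv_deriv_div_add_norm_sq {ι : Type*} [Fintype ι] [DecidableEq ι] (C k B : ℝ)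
    (x : EuclideanSpace ℝ ι) (hK : k + B * ‖x‖ ^ 2 ≠ 0) :
    ∑ i, deriv (deriv fun s : ℝ => C / (k + B * ‖x + s • EuclideanSpace.single i (1 : ℝ)‖ ^ 2)) 0
      = 2 * B * C * (4 * B * ‖x‖ ^ 2 - Fintype.card ι * (k + B * ‖x‖ ^ 2))
          / (k + B * ‖x‖ ^ 2) ^ 3 := by
  have hline : ∀ i,
      deriv (deriv fun s : ℝ => C / (k + B * ‖x + s • EuclideanSpace.single i (1 : ℝ)‖ ^ 2)) 0
        = C * (2 * (2 * B * x i) ^ 2 - 2 * B * (k + B * ‖x‖ ^ 2)) / (k + B * ‖x‖ ^ 2) ^ 3 := by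
    intro i
    simp_rw [EuclideanSpace.norm_add_smul_single_sq]
    rw [← deriv_deriv_div_quadratic_zero C (2 * B * x i) B hK]
    congr! 3 with s
    ring
  simp_rw [hline, ← Finset.sum_div, ← Finset.mul_sum, mul_pow, Finset.sum_sub_distrib,
    ← Finset.mul_sum, ← EuclideanSpace.real_norm_sq_eq, Finset.sum_const, Finset.card_univ,
    nsmul_eq_mul]
  ring

lemma one_div_mul_div_add_mul_div_sq {A B : ℝ} (hA : 0 < A) (hB : 0 ≤ B) (c r t : ℝ) :
    1 / t * (c / (A + B * (r / t) ^ 2)) = c * t / (A * t ^ 2 + B * r ^ 2) := by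
  rcases eq_or_ne t 0 with rfl | ht
  · simp
  · have : A * t ^ 2 + B * r ^ 2 ≠ 0 := by positivity
    field_simp

theorem stmt0 (d : ℕ) (hd : 5 ≤ d)
    (U : ℝ → ℝ)
    (hU : U = fun ρ => 2 * Real.sqrt (2 * ((d : ℝ) - 1) * ((d : ℝ) - 4)) /
        ((d : ℝ) - 4 + 3 * ρ ^ 2))
    (u : ℝ → EuclideanSpace ℝ (Fin d) → ℝ)
    (hu : u = fun t x => (1 / t) * U (‖x‖ / t)) :
    ∀ t : ℝ, 0 < t → ∀ x : EuclideanSpace ℝ (Fin d),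
      deriv (deriv (fun s => u s x)) t
        - ∑ i : Fin d,
            deriv (deriv (fun s : ℝ => u t (x + s • EuclideanSpace.single i (1 : ℝ)))) 0
        = (u t x) ^ 3 := by
  intro t ht x
  have hA : (0 : ℝ) < d - 4 := by
    have : (5 : ℝ) ≤ d := by exact_mod_cast hd
    linarith
  set c := 2 * Real.sqrt (2 * ((d : ℝ) - 1) * ((d : ℝ) - 4))
  have hc : c ^ 2 = 8 * ((d : ℝ) - 1) * ((d : ℝ) - 4) := by
    rw [mul_pow, Real.sq_sqrt (by nlinarith)]
    ring
  have hu_rational : u = fun t y => c * t / (((d : ℝ) - 4) * t ^ 2 + 3 * ‖y‖ ^ 2) := by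
    simp only [hu, hU, one_div_mul_div_add_mul_div_sq hA zero_le_three]
  have hK : ((d : ℝ) - 4) * t ^ 2 + 3 * ‖x‖ ^ 2 ≠ 0 := by positivity
  clear_value c
  subst hu_rational
  rw [deriv_deriv_mul_div_sq_add c hK, sum_deriv_deriv_div_add_norm_sq _ _ _ x hK,
    Fintype.card_fin]
  field_simp
  linear_combination (-c * t ^ 2) * hc
end

section
/- Let f(ρ) = 1/(1+ρ²)². Then f satisfies (1−ρ²) f''(ρ) + (6/ρ − 10ρ) f'(ρ) − (20 − 48/(1+ρ²)²) f(ρ) = 0 for ρ ∈ (0,1]. -/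
theorem hasDerivAt_inv_one_add_sq_pow (n : ℕ) (x : ℝ) :
    HasDerivAt (fun ρ : ℝ => ((1 + ρ ^ 2) ^ n)⁻¹)
      (-(2 * n * x) / (1 + x ^ 2) ^ (n + 1)) x := by
  have hbase : HasDerivAt (fun ρ : ℝ => 1 + ρ ^ 2) (2 * x) x := by
    simpa using (hasDerivAt_pow 2 x).const_add 1
  refine ((hbase.fun_pow n).fun_inv (by positivity)).congr_deriv ?_
  rcases n with _ | n
  · simp
  · field_simp
    push_cast
    ring

theorem deriv_inv_one_add_sq_sq :
    deriv (fun ρ : ℝ => ((1 + ρ ^ 2) ^ 2)⁻¹) = fun ρ => -4 * ρ * ((1 + ρ ^ 2) ^ 3)⁻¹ := by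
  funext x
  refine ((hasDerivAt_inv_one_add_sq_pow 2 x).congr_deriv ?_).deriv
  field_simp
  ring

theorem deriv_deriv_inv_one_add_sq_sq (x : ℝ) :
    deriv (deriv fun ρ : ℝ => ((1 + ρ ^ 2) ^ 2)⁻¹) x
      = (20 * x ^ 2 - 4) / (1 + x ^ 2) ^ 4 := by
  rw [deriv_inv_one_add_sq_sq]
  have hlin : HasDerivAt (fun ρ : ℝ => -4 * ρ) (-4) x := by
    simpa using (hasDerivAt_id x).const_mul (-4 : ℝ)
  refine ((hlin.mul (hasDerivAt_inv_one_add_sq_pow 3 x)).congr_deriv ?_).deriv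
  field_simp
  push_cast
  ring

theorem stmt6 (f : ℝ → ℝ) (hf : f = fun ρ => 1 / (1 + ρ ^ 2) ^ 2) :
    ∀ ρ : ℝ, 0 < ρ → ρ ≤ 1 →
      (1 - ρ ^ 2) * deriv (deriv f) ρ + (6 / ρ - 10 * ρ) * deriv f ρ
        - (20 - 48 / (1 + ρ ^ 2) ^ 2) * f ρ = 0 := by
  intro ρ hρ _
  simp only [hf, one_div]
  rw [deriv_deriv_inv_one_add_sq_sq, deriv_inv_one_add_sq_sq]
  field_simp
  ring
end

section
/- For real t and integers n ≥ 1, the rational function C_n(it) = −4(n+1)(2n+13)[(it)² + 2(2n+5)(it) + 4(n+3)(n+2)] / ([(it)² + 4(2n+7)(it) + 4(2n+11)(n+2)]·[(it)² + 4(2n+5)(it) + 4(2n+9)(n+1)]) satisfies |C_n(it)| ≤ 1/2. -/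
/-!
On the imaginary axis a quadratic with real coefficients satisfies
`|(it)² + b(it) + c|² = (c - t²)² + b² t²`. Hence `4 |B_n(it)|² ≤ |r̃_n(it) r̃_{n+1}(it)|²` becomes a
polynomial inequality in `x = n` and `s = t²`, and the difference of its two sides is a polynomial
with nonnegative coefficients in `x` and `s`.
-/

open Complex

theorem Complex.normSq_I_mul_sq_add (b c t : ℝ) :
    normSq ((I * t) ^ 2 + b * (I * t) + c) = (c - t ^ 2) ^ 2 + b ^ 2 * t ^ 2 := by
  have h : (I * t) ^ 2 + b * (I * t) + c = ((c - t ^ 2 : ℝ) : ℂ) + ((b * t : ℝ) : ℂ) * I := by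
    push_cast
    linear_combination (t : ℂ) ^ 2 * I_sq
  rw [h, normSq_add_mul_I]
  ring

theorem Complex.norm_div_le_of_normSq_le {a b : ℂ} {r : ℝ} (hr : 0 ≤ r)
    (h : normSq a ≤ r ^ 2 * normSq b) : ‖a / b‖ ≤ r := by
  have hsq : ‖a / b‖ ^ 2 ≤ r ^ 2 := by
    rw [Complex.sq_norm, normSq_div]
    exact div_le_of_le_mul₀ (normSq_nonneg b) (sq_nonneg r) h
  exact (pow_le_pow_iff_left₀ (norm_nonneg _) hr two_ne_zero).1 hsq

theorem four_mul_normSq_numerator_le_normSq_denominator (x s : ℝ) (hx : 0 ≤ x) (hs : 0 ≤ s) :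
    4 * (16 * (x + 1) ^ 2 * (2 * x + 13) ^ 2 *
        ((4 * (x + 3) * (x + 2) - s) ^ 2 + (2 * (2 * x + 5)) ^ 2 * s)) ≤
      ((4 * (2 * x + 11) * (x + 2) - s) ^ 2 + (4 * (2 * x + 7)) ^ 2 * s) *
        ((4 * (2 * x + 9) * (x + 1) - s) ^ 2 + (4 * (2 * x + 5)) ^ 2 * s) := by
  rw [← sub_nonneg]
  have expand :
      ((4 * (2 * x + 11) * (x + 2) - s) ^ 2 + (4 * (2 * x + 7)) ^ 2 * s) *
          ((4 * (2 * x + 9) * (x + 1) - s) ^ 2 + (4 * (2 * x + 5)) ^ 2 * s) -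
        4 * (16 * (x + 1) ^ 2 * (2 * x + 13) ^ 2 *
          ((4 * (x + 3) * (x + 2) - s) ^ 2 + (2 * (2 * x + 5)) ^ 2 * s)) =
      s ^ 4 + s ^ 3 * (936 + 560 * x + 96 * x ^ 2) +
        s ^ 2 * (197648 + 237408 * x + 110816 * x ^ 2 + 24704 * x ^ 3 + 2176 * x ^ 4) +
        s * (2765568 + 5880960 * x + 5086080 * x ^ 2 + 2279168 * x ^ 3 + 565760 * x ^ 4 +
          74752 * x ^ 5 + 4096 * x ^ 6) +
        (3806208 + 13458432 * x + 18821376 * x ^ 2 + 13350400 * x ^ 3 + 5138688 * x ^ 4 +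
          1060864 * x ^ 5 + 107520 * x ^ 6 + 4096 * x ^ 7) := by
    ring
  rw [expand]
  positivity

theorem stmt12_general (n : ℕ) (t : ℝ) :
    ‖
      ((-4 * ((n : ℂ) + 1) * (2 * (n : ℂ) + 13) *
          ((Complex.I * (t : ℂ)) ^ 2 + 2 * (2 * (n : ℂ) + 5) * (Complex.I * (t : ℂ)) +
            4 * ((n : ℂ) + 3) * ((n : ℂ) + 2))) /
        (((Complex.I * (t : ℂ)) ^ 2 + 4 * (2 * (n : ℂ) + 7) * (Complex.I * (t : ℂ)) +
            4 * (2 * (n : ℂ) + 11) * ((n : ℂ) + 2)) *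
          ((Complex.I * (t : ℂ)) ^ 2 + 4 * (2 * (n : ℂ) + 5) * (Complex.I * (t : ℂ)) +
            4 * (2 * (n : ℂ) + 9) * ((n : ℂ) + 1))))‖ ≤ 1 / 2 := by
  apply Complex.norm_div_le_of_normSq_le (by norm_num)
  simp only [← ofReal_natCast, ← ofReal_ofNat, ← ofReal_one, ← ofReal_mul, ← ofReal_add,
    ← ofReal_neg, normSq_mul, normSq_ofReal, normSq_I_mul_sq_add]
  linear_combination
    (1 / 4 : ℝ) * four_mul_normSq_numerator_le_normSq_denominator n (t ^ 2) n.cast_nonneg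
      (sq_nonneg t)

theorem stmt12 (n : ℕ) (hn : 1 ≤ n) (t : ℝ) :
    ‖
      ((-4 * ((n : ℂ) + 1) * (2 * (n : ℂ) + 13) *
          ((Complex.I * (t : ℂ)) ^ 2 + 2 * (2 * (n : ℂ) + 5) * (Complex.I * (t : ℂ)) +
            4 * ((n : ℂ) + 3) * ((n : ℂ) + 2))) /
        (((Complex.I * (t : ℂ)) ^ 2 + 4 * (2 * (n : ℂ) + 7) * (Complex.I * (t : ℂ)) +
            4 * (2 * (n : ℂ) + 11) * ((n : ℂ) + 2)) *
          ((Complex.I * (t : ℂ)) ^ 2 + 4 * (2 * (n : ℂ) + 5) * (Complex.I * (t : ℂ)) +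
            4 * (2 * (n : ℂ) + 9) * ((n : ℂ) + 1))))‖ ≤ 1 / 2 :=
  stmt12_general n t
end
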